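/- Let ω be a non-quasianalytic weight function and N ≥ 1. If f, g ∈ 𝒪_{C,ω}(ℝ^N), then the pointwise product f·g belongs to 𝒪_{C,ω}(ℝ^N); that is, 𝒪_{C,ω}(ℝ^N) is closed under pointwise multiplication. -/
import Mathlib


open MeasureTheory
open scoped ENNReal

noncomputable section

/-- The Young conjugate `φ*_ω(s) = sup_{t ≥ 0} (s·t − ω(eᵗ))`, valued in `[0,∞]`. -/
def phiStar (ω : ℝ → ℝ) (s : ℝ) : ℝ≥0∞ :=
  ⨆ t : {t : ℝ // 0 ≤ t}, ENNReal.ofReal (s * t.1 - ω (Real.exp t.1))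

/-- `exp : [0,∞] → [0,∞]` with the convention `exp(+∞) = +∞`. -/
def expE (a : ℝ≥0∞) : ℝ≥0∞ :=
  if a = ∞ then ∞ else ENNReal.ofReal (Real.exp a.toReal)

/-- `a ↦ exp(−a)` on `[0,∞]` with the convention `exp(−∞) = 0`. -/
def expNegE (a : ℝ≥0∞) : ℝ≥0∞ :=
  if a = ∞ then 0 else ENNReal.ofReal (Real.exp (-a.toReal))

/-- A non-quasianalytic weight function in the sense of Braun–Meise–Taylor
(Beurling setting, vanishing on `[0,1]`). -/
structure IsNQWeight (ω : ℝ → ℝ) : Prop where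
  continuous : ContinuousOn ω (Set.Ici 0)
  monotone : MonotoneOn ω (Set.Ici 0)
  nonneg : ∀ t, 0 ≤ t → 0 ≤ ω t
  zero_on_unit : ∀ t, 0 ≤ t → t ≤ 1 → ω t = 0
  alpha : ∃ K : ℝ, 1 ≤ K ∧ ∀ t, 0 ≤ t → ω (2 * t) ≤ K * (1 + ω t)
  beta : IntegrableOn (fun t => ω t / (1 + t ^ 2)) (Set.Ici 1)
  gamma : ∃ a : ℝ, ∃ b : ℝ, 0 < b ∧ ∀ t, 0 ≤ t → a + b * Real.log (1 + t) ≤ ω t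
  delta : ConvexOn ℝ (Set.Ici 0) (fun t => ω (Real.exp t))

/-- The seminorm `q_{m,n}(f) = sup_{j,x} ‖D^j f(x)‖ exp(n ω(|x|) − m φ*_ω(j/m))`, in `[0,∞]`. -/
def qSem {N : ℕ} (ω : ℝ → ℝ) (m n : ℕ) (f : EuclideanSpace ℝ (Fin N) → ℂ) : ℝ≥0∞ :=
  ⨆ (j : ℕ) (x : EuclideanSpace ℝ (Fin N)),
    ENNReal.ofReal (‖iteratedFDeriv ℝ j f x‖ * Real.exp (n * ω ‖x‖)) *
      expNegE ((m : ℝ≥0∞) * phiStar ω ((j : ℝ) / (m : ℝ)))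

/-- The seminorm `r_{m,n}(f) = sup_{j,x} ‖D^j f(x)‖ exp(−n ω(|x|) − m φ*_ω(j/m))`, in `[0,∞]`. -/
def rSem {N : ℕ} (ω : ℝ → ℝ) (m n : ℕ) (f : EuclideanSpace ℝ (Fin N) → ℂ) : ℝ≥0∞ :=
  ⨆ (j : ℕ) (x : EuclideanSpace ℝ (Fin N)),
    ENNReal.ofReal (‖iteratedFDeriv ℝ j f x‖ * Real.exp (-(n * ω ‖x‖))) *
      expNegE ((m : ℝ≥0∞) * phiStar ω ((j : ℝ) / (m : ℝ)))

/-- Membership in the Björck space `𝒮_ω(ℝ^N)`. -/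
def MemSomega {N : ℕ} (ω : ℝ → ℝ) (f : EuclideanSpace ℝ (Fin N) → ℂ) : Prop :=
  ContDiff ℝ (⊤ : ℕ∞) f ∧ ∀ m n : ℕ, 1 ≤ m → qSem ω m n f ≠ ∞

/-- Membership in the space `𝒪_{M,ω}(ℝ^N)` of slowly increasing functions of Beurling type. -/
def MemOMomega {N : ℕ} (ω : ℝ → ℝ) (f : EuclideanSpace ℝ (Fin N) → ℂ) : Prop :=
  ContDiff ℝ (⊤ : ℕ∞) f ∧ ∀ m : ℕ, 1 ≤ m → ∃ n : ℕ, ∃ C : ℝ, 0 < C ∧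
    ∀ (j : ℕ) (x : EuclideanSpace ℝ (Fin N)),
      (ENNReal.ofReal ‖iteratedFDeriv ℝ j f x‖) ≤
        ENNReal.ofReal (C * Real.exp (n * ω ‖x‖)) *
          expE ((m : ℝ≥0∞) * phiStar ω ((j : ℝ) / (m : ℝ)))

/-- Membership in the space `𝒪_{C,ω}(ℝ^N)` of very slowly increasing functions. -/
def MemOComega {N : ℕ} (ω : ℝ → ℝ) (f : EuclideanSpace ℝ (Fin N) → ℂ) : Prop :=
  ContDiff ℝ (⊤ : ℕ∞) f ∧ ∃ n : ℕ, ∀ m : ℕ, 1 ≤ m → ∃ C : ℝ, 0 < C ∧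
    ∀ (j : ℕ) (x : EuclideanSpace ℝ (Fin N)),
      (ENNReal.ofReal ‖iteratedFDeriv ℝ j f x‖) ≤
        ENNReal.ofReal (C * Real.exp (n * ω ‖x‖)) *
          expE ((m : ℝ≥0∞) * phiStar ω ((j : ℝ) / (m : ℝ)))


lemma expE_ne_zero (a : ℝ≥0∞) : expE a ≠ 0 := by
  unfold expE
  split
  · exact ENNReal.top_ne_zero
  · simp [ENNReal.ofReal_eq_zero, Real.exp_pos, not_le, (Real.exp_pos _)]

lemma expE_add (a b : ℝ≥0∞) : expE (a + b) = expE a * expE b := by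
  unfold expE
  rcases eq_or_ne a ∞ with ha | ha
  · simp [ha, top_add, ENNReal.top_mul, ENNReal.ofReal_eq_zero, not_le, Real.exp_pos]
  rcases eq_or_ne b ∞ with hb | hb
  · simp [hb, add_top, ENNReal.mul_top, ENNReal.ofReal_eq_zero, not_le, Real.exp_pos]
  rw [if_neg (by simp [ENNReal.add_eq_top, ha, hb]), if_neg ha, if_neg hb,
    ENNReal.toReal_add ha hb, Real.exp_add, ENNReal.ofReal_mul (Real.exp_pos _).le]

lemma expE_mono {a b : ℝ≥0∞} (h : a ≤ b) : expE a ≤ expE b := by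
  unfold expE
  rcases eq_or_ne b ∞ with hb | hb
  · simp [hb]
  rw [if_neg hb, if_neg (by exact fun ha => hb (top_le_iff.mp (ha ▸ h)))]
  exact ENNReal.ofReal_le_ofReal (Real.exp_le_exp.mpr (ENNReal.toReal_mono hb h))

lemma expE_ofReal {c : ℝ} (hc : 0 ≤ c) : expE (ENNReal.ofReal c) = ENNReal.ofReal (Real.exp c) := by
  unfold expE
  rw [if_neg ENNReal.ofReal_ne_top, ENNReal.toReal_ofReal', max_eq_left hc]

variable {ω : ℝ → ℝ}

lemma le_phiStar (s : ℝ) {t : ℝ} (ht : 0 ≤ t) :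
    ENNReal.ofReal (s * t - ω (Real.exp t)) ≤ phiStar ω s :=
  le_iSup_of_le ⟨t, ht⟩ le_rfl

lemma phiStar_superadd (hω : IsNQWeight ω) {s1 s2 : ℝ} (h1 : 0 ≤ s1) (h2 : 0 ≤ s2) :
    phiStar ω s1 + phiStar ω s2 ≤ phiStar ω (s1 + s2) := by
  refine ENNReal.iSup_add_iSup_le fun t1 t2 => ?_
  obtain ⟨t1, ht1⟩ := t1; obtain ⟨t2, ht2⟩ := t2
  have hw1 : 0 ≤ ω (Real.exp t1) := hω.nonneg _ (Real.exp_pos _).le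
  have hw2 : 0 ≤ ω (Real.exp t2) := hω.nonneg _ (Real.exp_pos _).le
  rcases le_or_gt (s2 * t2 - ω (Real.exp t2)) 0 with h | h
  · rw [ENNReal.ofReal_eq_zero.mpr h, add_zero]
    refine le_trans (ENNReal.ofReal_le_ofReal ?_) (le_phiStar _ ht1)
    nlinarith
  rcases le_or_gt (s1 * t1 - ω (Real.exp t1)) 0 with h' | h'
  · rw [ENNReal.ofReal_eq_zero.mpr h', zero_add]
    refine le_trans (ENNReal.ofReal_le_ofReal ?_) (le_phiStar _ ht2)
    nlinarith
  rcases le_total t1 t2 with htt | htt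
  · rw [← ENNReal.ofReal_add (by linarith) (by linarith)]
    refine le_trans (ENNReal.ofReal_le_ofReal ?_) (le_phiStar _ ht2)
    nlinarith
  · rw [← ENNReal.ofReal_add (by linarith) (by linarith)]
    refine le_trans (ENNReal.ofReal_le_ofReal ?_) (le_phiStar _ ht1)
    nlinarith

lemma natMul_phiStar {m : ℕ} (hm : 1 ≤ m) (y : ℝ) :
    (m : ℝ≥0∞) * phiStar ω (y / m) =
      ⨆ t : {t : ℝ // 0 ≤ t}, ENNReal.ofReal (y * t.1 - m * ω (Real.exp t.1)) := by
  have hm0 : (0:ℝ) < m := by exact_mod_cast hm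
  rw [phiStar, ENNReal.mul_iSup]
  congr 1; funext t
  rw [show ((m : ℕ) : ℝ≥0∞) = ENNReal.ofReal (m : ℝ) by simp,
    ← ENNReal.ofReal_mul hm0.le]
  congr 1
  field_simp

lemma keyB (hω : IsNQWeight ω) {m Kn : ℕ} (hm : 1 ≤ m) {K : ℝ} (hK1 : 1 ≤ K)
    (hα : ∀ t, 0 ≤ t → ω (2 * t) ≤ K * (1 + ω t)) (hKn : K ≤ Kn) {y : ℝ} (hy : 0 ≤ y) :
    ENNReal.ofReal (y * Real.log 2) + ((m * Kn : ℕ) : ℝ≥0∞) * phiStar ω (y / ((m * Kn : ℕ) : ℝ)) ≤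
      ENNReal.ofReal ((m * Kn : ℕ) : ℝ) + (m : ℝ≥0∞) * phiStar ω (y / m) := by
  haveI : Nonempty {t : ℝ // 0 ≤ t} := ⟨⟨0, le_rfl⟩⟩
  have hKn1 : 1 ≤ Kn := by exact_mod_cast hK1.trans hKn
  have hL : 1 ≤ m * Kn := Nat.one_le_iff_ne_zero.mpr (Nat.mul_ne_zero (by omega) (by omega))
  set L : ℕ := m * Kn with hLdef
  have hmK : (m : ℝ) * K ≤ (L : ℝ) := by
    have : (m : ℝ) * K ≤ (m : ℝ) * Kn := by
      apply mul_le_mul_of_nonneg_left hKn (by positivity)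
    simpa [hLdef] using this
  have hm0 : (0 : ℝ) < m := by exact_mod_cast hm
  have hw2 : ω (Real.exp (Real.log 2)) ≤ K := by
    rw [Real.exp_log (by norm_num : (0:ℝ) < 2)]
    have := hα 1 zero_le_one
    rw [hω.zero_on_unit 1 zero_le_one le_rfl] at this
    simpa using this
  have hlog2 : (0 : ℝ) ≤ Real.log 2 := Real.log_nonneg one_le_two
  have hstep : ∀ t : ℝ, 0 ≤ t →
      ω (Real.exp (t + Real.log 2)) ≤ K + K * ω (Real.exp t) := by
    intro t ht
    have : Real.exp (t + Real.log 2) = 2 * Real.exp t := by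
      rw [Real.exp_add, Real.exp_log (by norm_num : (0:ℝ) < 2)]; ring
    rw [this]
    have := hα (Real.exp t) (Real.exp_pos t).le
    linarith
  rw [natMul_phiStar hL, natMul_phiStar hm, ENNReal.add_iSup]
  refine iSup_le fun t => ?_
  obtain ⟨t, ht⟩ := t
  have hwt : 0 ≤ ω (Real.exp t) := hω.nonneg _ (Real.exp_pos _).le
  have hwlog : 0 ≤ ω (Real.exp (Real.log 2)) := hω.nonneg _ (Real.exp_pos _).le
  rcases le_or_gt (y * t - (L : ℝ) * ω (Real.exp t)) 0 with hb | hb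
  · rw [ENNReal.ofReal_eq_zero.mpr hb, add_zero]
    have h1 : y * Real.log 2 =
        (m : ℝ) * ω (Real.exp (Real.log 2)) + (y * Real.log 2 - m * ω (Real.exp (Real.log 2))) := by
      ring
    calc ENNReal.ofReal (y * Real.log 2)
        ≤ ENNReal.ofReal ((m : ℝ) * ω (Real.exp (Real.log 2)))
          + ENNReal.ofReal (y * Real.log 2 - m * ω (Real.exp (Real.log 2))) := by
          nth_rewrite 1 [h1]; exact ENNReal.ofReal_add_le
      _ ≤ ENNReal.ofReal ((L : ℕ) : ℝ)
          + ⨆ t : {t : ℝ // 0 ≤ t}, ENNReal.ofReal (y * t.1 - m * ω (Real.exp t.1)) := by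
          refine add_le_add (ENNReal.ofReal_le_ofReal ?_) (le_iSup_of_le ⟨Real.log 2, hlog2⟩ le_rfl)
          nlinarith
  · rw [← ENNReal.ofReal_add (by positivity) hb.le]
    have h2 : y * Real.log 2 + (y * t - (L : ℝ) * ω (Real.exp t)) ≤
        (L : ℝ) + (y * (t + Real.log 2) - m * ω (Real.exp (t + Real.log 2))) := by
      have := hstep t ht
      nlinarith
    calc ENNReal.ofReal (y * Real.log 2 + (y * t - (L : ℝ) * ω (Real.exp t)))
        ≤ ENNReal.ofReal ((L : ℝ) + (y * (t + Real.log 2) - m * ω (Real.exp (t + Real.log 2)))) :=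
          ENNReal.ofReal_le_ofReal h2
      _ ≤ ENNReal.ofReal ((L : ℕ) : ℝ)
          + ENNReal.ofReal (y * (t + Real.log 2) - m * ω (Real.exp (t + Real.log 2))) :=
          ENNReal.ofReal_add_le
      _ ≤ _ := add_le_add le_rfl (le_iSup_of_le ⟨t + Real.log 2, by linarith⟩ le_rfl)

lemma natMul_phiStar_superadd {ω : ℝ → ℝ} (hω : IsNQWeight ω) {L : ℕ} (hL : 1 ≤ L)
    {i k : ℕ} :
    (L : ℝ≥0∞) * phiStar ω ((i : ℝ) / L) + (L : ℝ≥0∞) * phiStar ω ((k : ℝ) / L) ≤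
      (L : ℝ≥0∞) * phiStar ω (((i + k : ℕ) : ℝ) / L) := by
  rw [← mul_add]
  refine mul_le_mul_right ?_ _
  have hcast : ((i + k : ℕ) : ℝ) / L = (i : ℝ) / L + (k : ℝ) / L := by
    push_cast; ring
  rw [hcast]
  exact phiStar_superadd hω (by positivity) (by positivity)

/-- `𝒪_{C,ω}(ℝ^N)` is closed under pointwise multiplication. -/
theorem stmt6 {N : ℕ} (hN : 1 ≤ N) (ω : ℝ → ℝ) (hω : IsNQWeight ω)
    (f g : EuclideanSpace ℝ (Fin N) → ℂ)
    (hf : MemOComega ω f) (hg : MemOComega ω g) :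
    MemOComega ω (fun x => f x * g x) := by
  obtain ⟨hfC, nf, hf⟩ := hf
  obtain ⟨hgC, ng, hg⟩ := hg
  refine ⟨hfC.mul hgC, nf + ng, fun m hm => ?_⟩
  obtain ⟨K, hK1, hα⟩ := hω.alpha
  set Kn : ℕ := ⌈K⌉₊ with hKndef
  have hKKn : K ≤ (Kn : ℝ) := Nat.le_ceil K
  have hKn1 : 1 ≤ Kn := by exact_mod_cast hK1.trans hKKn
  have hL : 1 ≤ m * Kn := Nat.one_le_iff_ne_zero.mpr (Nat.mul_ne_zero (by omega) (by omega))
  obtain ⟨Cf, hCf, hfb⟩ := hf (m * Kn) hL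
  obtain ⟨Cg, hCg, hgb⟩ := hg (m * Kn) hL
  refine ⟨Cf * Cg * Real.exp ((m * Kn : ℕ) : ℝ), by positivity, fun j x => ?_⟩
  set L : ℕ := m * Kn with hLdef
  set E : ℝ≥0∞ := expE ((L : ℝ≥0∞) * phiStar ω ((j : ℝ) / (L : ℝ))) with hEdef
  set n : ℕ := nf + ng with hndef
  -- pointwise bound on each term of the Leibniz sum
  have key : ∀ i ∈ Finset.range (j + 1),
      ENNReal.ofReal (‖iteratedFDeriv ℝ i f x‖ * ‖iteratedFDeriv ℝ (j - i) g x‖) ≤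
        ENNReal.ofReal ((Cf * Cg) * Real.exp ((n : ℝ) * ω ‖x‖)) * E := by
    intro i hi
    have hij : i ≤ j := Finset.mem_range_succ_iff.mp hi
    rw [ENNReal.ofReal_mul (norm_nonneg _)]
    calc ENNReal.ofReal ‖iteratedFDeriv ℝ i f x‖ * ENNReal.ofReal ‖iteratedFDeriv ℝ (j - i) g x‖
        ≤ (ENNReal.ofReal (Cf * Real.exp ((nf : ℝ) * ω ‖x‖)) *
              expE ((L : ℝ≥0∞) * phiStar ω ((i : ℝ) / (L : ℝ)))) *
          (ENNReal.ofReal (Cg * Real.exp ((ng : ℝ) * ω ‖x‖)) *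
              expE ((L : ℝ≥0∞) * phiStar ω (((j - i : ℕ) : ℝ) / (L : ℝ)))) :=
          mul_le_mul' (hfb i x) (hgb (j - i) x)
      _ = ENNReal.ofReal ((Cf * Cg) * Real.exp ((n : ℝ) * ω ‖x‖)) *
            expE ((L : ℝ≥0∞) * phiStar ω ((i : ℝ) / (L : ℝ)) +
              (L : ℝ≥0∞) * phiStar ω (((j - i : ℕ) : ℝ) / (L : ℝ))) := by
          rw [mul_mul_mul_comm, ← ENNReal.ofReal_mul (by positivity), ← expE_add]
          congr 2
          rw [hndef]
          push_cast
          rw [add_mul, Real.exp_add]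
          ring
      _ ≤ ENNReal.ofReal ((Cf * Cg) * Real.exp ((n : ℝ) * ω ‖x‖)) * E := by
          refine mul_le_mul_right (expE_mono ?_) _
          have h := natMul_phiStar_superadd hω hL (i := i) (k := j - i)
          rwa [Nat.add_sub_cancel' hij] at h
  have hsum : ‖iteratedFDeriv ℝ j (fun x => f x * g x) x‖ ≤
      ∑ i ∈ Finset.range (j + 1), (j.choose i : ℝ) * ‖iteratedFDeriv ℝ i f x‖ *
        ‖iteratedFDeriv ℝ (j - i) g x‖ :=
    norm_iteratedFDeriv_mul_le hfC hgC x (by exact_mod_cast le_top)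
  have hterm_nonneg : ∀ i ∈ Finset.range (j + 1),
      0 ≤ (j.choose i : ℝ) * ‖iteratedFDeriv ℝ i f x‖ * ‖iteratedFDeriv ℝ (j - i) g x‖ :=
    fun i _ => by positivity
  calc ENNReal.ofReal ‖iteratedFDeriv ℝ j (fun x => f x * g x) x‖
      ≤ ENNReal.ofReal (∑ i ∈ Finset.range (j + 1), (j.choose i : ℝ) *
          ‖iteratedFDeriv ℝ i f x‖ * ‖iteratedFDeriv ℝ (j - i) g x‖) :=
        ENNReal.ofReal_le_ofReal hsum
    _ = ∑ i ∈ Finset.range (j + 1), (j.choose i : ℝ≥0∞) *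
          ENNReal.ofReal (‖iteratedFDeriv ℝ i f x‖ * ‖iteratedFDeriv ℝ (j - i) g x‖) := by
        rw [ENNReal.ofReal_sum_of_nonneg hterm_nonneg]
        refine Finset.sum_congr rfl fun i _ => ?_
        rw [mul_assoc, ENNReal.ofReal_mul (by positivity), ENNReal.ofReal_natCast]
    _ ≤ ∑ i ∈ Finset.range (j + 1), (j.choose i : ℝ≥0∞) *
          (ENNReal.ofReal ((Cf * Cg) * Real.exp ((n : ℝ) * ω ‖x‖)) * E) :=
        Finset.sum_le_sum fun i hi => mul_le_mul_right (key i hi) _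
    _ = ENNReal.ofReal ((2 : ℝ) ^ j) *
          (ENNReal.ofReal ((Cf * Cg) * Real.exp ((n : ℝ) * ω ‖x‖)) * E) := by
        rw [← Finset.sum_mul]
        congr 1
        rw [show ((2 : ℝ) ^ j) = (((2 ^ j : ℕ) : ℝ)) by push_cast; ring,
          ENNReal.ofReal_natCast, ← Nat.sum_range_choose j]
        push_cast
        rfl
    _ ≤ ENNReal.ofReal (Cf * Cg * Real.exp ((L : ℕ) : ℝ) * Real.exp ((n : ℝ) * ω ‖x‖)) *
          expE ((m : ℝ≥0∞) * phiStar ω ((j : ℝ) / (m : ℝ))) := by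
        have h2j : ENNReal.ofReal ((2 : ℝ) ^ j) = expE (ENNReal.ofReal ((j : ℝ) * Real.log 2)) := by
          rw [expE_ofReal (by positivity)]
          congr 1
          rw [Real.exp_nat_mul, Real.exp_log (by norm_num : (0:ℝ) < 2)]
        have hmain : ENNReal.ofReal ((2 : ℝ) ^ j) * E ≤
            ENNReal.ofReal (Real.exp ((L : ℕ) : ℝ)) *
              expE ((m : ℝ≥0∞) * phiStar ω ((j : ℝ) / (m : ℝ))) := by
          rw [h2j, hEdef, ← expE_add]
          calc expE (ENNReal.ofReal ((j : ℝ) * Real.log 2) +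
                (L : ℝ≥0∞) * phiStar ω ((j : ℝ) / (L : ℝ)))
              ≤ expE (ENNReal.ofReal ((L : ℕ) : ℝ) +
                (m : ℝ≥0∞) * phiStar ω ((j : ℝ) / (m : ℝ))) :=
              expE_mono (keyB hω hm hK1 hα hKKn (Nat.cast_nonneg j))
            _ = _ := by
              rw [expE_add, expE_ofReal (by positivity)]
        calc ENNReal.ofReal ((2 : ℝ) ^ j) *
              (ENNReal.ofReal ((Cf * Cg) * Real.exp ((n : ℝ) * ω ‖x‖)) * E)
            = ENNReal.ofReal ((Cf * Cg) * Real.exp ((n : ℝ) * ω ‖x‖)) *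
              (ENNReal.ofReal ((2 : ℝ) ^ j) * E) := by ring
          _ ≤ ENNReal.ofReal ((Cf * Cg) * Real.exp ((n : ℝ) * ω ‖x‖)) *
              (ENNReal.ofReal (Real.exp ((L : ℕ) : ℝ)) *
                expE ((m : ℝ≥0∞) * phiStar ω ((j : ℝ) / (m : ℝ)))) :=
              mul_le_mul_right hmain _
          _ = _ := by
              rw [← mul_assoc, ← ENNReal.ofReal_mul (by positivity)]
              congr 2
              ring

end
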